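/- arXiv:1708.02732 — 4 statements merged into one kernel-verified Lean document; each statement's English description precedes it below -/
import Mathlib

section
/- Let f : ℝ → ℝ be twice continuously differentiable, α a simple zero of f, a₀ ≠ 0, and F(x) = x - f(x)·f'(x)/(a₀·(f'(x))² + a₁·f(x)·f''(x)). Then F is differentiable at α and F'(α) = 1 - 1/a₀. -/
lemma hasDerivAt_mul_of_zero {u g : ℝ → ℝ} {u' α : ℝ} (hu : HasDerivAt u u' α)
    (h0 : u α = 0) (hg : ContinuousAt g α) :
    HasDerivAt (fun x => u x * g x) (u' * g α) α := by
  rw [hasDerivAt_iff_tendsto_slope] at hu ⊢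
  have hgt : Filter.Tendsto g (nhdsWithin α {α}ᶜ) (nhds (g α)) :=
    hg.continuousWithinAt.tendsto
  refine (hu.mul hgt).congr' ?_
  filter_upwards [self_mem_nhdsWithin] with x hx
  have : slope (fun x => u x * g x) α x = slope u α x * g x := by
    simp only [slope_def_field, h0, mul_zero, sub_zero]
    ring
  simp [this]

theorem deriv_modified_newton (f : ℝ → ℝ) (hf : ContDiff ℝ 2 f)
    (a₀ a₁ : ℝ) (ha₀ : a₀ ≠ 0) (α : ℝ) (hα : f α = 0) (hα' : deriv f α ≠ 0)
    (F : ℝ → ℝ)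
    (hF : ∀ x, F x = x - f x * deriv f x /
      (a₀ * (deriv f x) ^ 2 + a₁ * f x * deriv (deriv f) x)) :
    DifferentiableAt ℝ F α ∧ deriv F α = 1 - 1 / a₀ := by
  have hfd : Differentiable ℝ f := hf.differentiable two_ne_zero
  have hf1 : ContDiff ℝ 1 (deriv f) := by
    have := (contDiff_succ_iff_deriv (n := 1)).mp (by exact_mod_cast hf)
    exact this.2.2
  have hf'd : Differentiable ℝ (deriv f) := hf1.differentiable one_ne_zero
  have hf''c : Continuous (deriv (deriv f)) := hf1.continuous_deriv le_rfl
  set f' := deriv f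
  set f'' := deriv (deriv f)
  -- u = f / f'
  have hu : HasDerivAt (fun x => f x / f' x) 1 α := by
    have h := ((hfd α).hasDerivAt).div ((hf'd α).hasDerivAt) hα'
    have : (deriv f α * f' α - f α * deriv f' α) / f' α ^ 2 = 1 := by
      rw [hα]; field_simp [f']; ring
    rwa [this] at h
  set u : ℝ → ℝ := fun x => f x / f' x with hu_def
  have hu0 : u α = 0 := by simp [u, hα]
  -- w = f'' / f'
  have hwc : ContinuousAt (fun x => f'' x / f' x) α :=
    (hf''c.continuousAt).div (hf1.continuous.continuousAt) hα'
  set w : ℝ → ℝ := fun x => f'' x / f' x with hw_def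
  -- v = u * w
  have hv : HasDerivAt (fun x => u x * w x) (1 * w α) α :=
    hasDerivAt_mul_of_zero hu hu0 hwc
  set v : ℝ → ℝ := fun x => u x * w x with hv_def
  have hv0 : v α = 0 := by simp [v, hu0]
  -- D = a₀ + a₁ * v
  have hD : HasDerivAt (fun x => a₀ + a₁ * v x) (a₁ * (1 * w α)) α :=
    (hv.const_mul a₁).const_add a₀
  set D : ℝ → ℝ := fun x => a₀ + a₁ * v x with hD_def
  have hD0 : D α = a₀ := by simp [D, hv0]
  -- q = u / D
  have hq : HasDerivAt (fun x => u x / D x) (1 / a₀) α := by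
    have h := hu.div hD (by rw [hD0]; exact ha₀)
    have : (1 * D α - u α * (a₁ * (1 * w α))) / D α ^ 2 = 1 / a₀ := by
      rw [hD0, hu0]; field_simp; ring
    rwa [this] at h
  -- G = x - q x
  have hG : HasDerivAt (fun x => x - u x / D x) (1 - 1 / a₀) α :=
    (hasDerivAt_id α).sub hq
  -- F =ᶠ G near α
  have hFG : F =ᶠ[nhds α] (fun x => x - u x / D x) := by
    have h1 : ∀ᶠ x in nhds α, f' x ≠ 0 :=
      (hf1.continuous.continuousAt).eventually_ne hα'
    have h2 : ∀ᶠ x in nhds α, a₀ * (f' x) ^ 2 + a₁ * f x * f'' x ≠ 0 := by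
      have hc : ContinuousAt (fun x => a₀ * (f' x) ^ 2 + a₁ * f x * f'' x) α :=
        ((continuousAt_const.mul ((hf1.continuous.continuousAt).pow 2)).add
          ((continuousAt_const.mul (hfd.continuous.continuousAt)).mul hf''c.continuousAt))
      apply hc.eventually_ne
      simp only [hα, mul_zero, zero_mul, add_zero]
      exact mul_ne_zero ha₀ (pow_ne_zero 2 hα')
    filter_upwards [h1, h2] with x h1x h2x
    rw [hF x]
    have : u x / D x = f x * f' x / (a₀ * f' x ^ 2 + a₁ * f x * f'' x) := by
      have h3 : f x * f' x * a₁ * f'' x + f' x ^ 3 * a₀ ≠ 0 := by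
        have := mul_ne_zero h1x h2x
        intro h; apply this; rw [← h]; ring
      rw [hu_def, hD_def, hv_def, hu_def, hw_def]
      field_simp
    rw [this]
  have hFd : HasDerivAt F (1 - 1 / a₀) α := hG.congr_of_eventuallyEq hFG
  exact ⟨hFd.differentiableAt, hFd.deriv⟩
end

section
/- Let f : ℝ → ℝ be three times continuously differentiable, α a simple zero of f, and F(x) = x - f(x)·f'(x)/((f'(x))² + a₁·f(x)·f''(x)) (i.e. a₀ = 1). Then F'(α) = 0. -/
theorem deriv_modified_newton_a0_one (f : ℝ → ℝ) (hf : ContDiff ℝ 3 f)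
    (a₁ : ℝ) (α : ℝ) (hα : f α = 0) (hα' : deriv f α ≠ 0)
    (F : ℝ → ℝ)
    (hF : ∀ x, F x = x - f x * deriv f x /
      ((deriv f x) ^ 2 + a₁ * f x * deriv (deriv f) x)) :
    deriv F α = 0 := by
  have hfd : Differentiable ℝ f := hf.differentiable (by norm_num)
  have hf3 : ContDiff ℝ (2 + 1) f := by exact_mod_cast hf
  have hf' : ContDiff ℝ (1 + 1) (deriv f) :=
    (contDiff_succ_iff_deriv.mp hf3).2.2
  have hf'd : Differentiable ℝ (deriv f) := hf'.differentiable (by norm_num)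
  have hf'' : ContDiff ℝ 1 (deriv (deriv f)) :=
    (contDiff_succ_iff_deriv.mp hf').2.2
  have hf''d : Differentiable ℝ (deriv (deriv f)) := hf''.differentiable (by norm_num)
  have h1 : HasDerivAt f (deriv f α) α := (hfd α).hasDerivAt
  have h2 : HasDerivAt (deriv f) (deriv (deriv f) α) α := (hf'd α).hasDerivAt
  have h3 : HasDerivAt (deriv (deriv f)) (deriv (deriv (deriv f)) α) α :=
    (hf''d α).hasDerivAt
  have hnum : HasDerivAt (fun x => f x * deriv f x)
      (deriv f α * deriv f α + f α * deriv (deriv f) α) α := h1.mul h2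
  have hden : HasDerivAt (fun x => (deriv f x) ^ 2 + a₁ * f x * deriv (deriv f) x)
      ((2 : ℕ) * deriv f α ^ 1 * deriv (deriv f) α +
        (a₁ * deriv f α * deriv (deriv f) α + a₁ * f α * deriv (deriv (deriv f)) α)) α :=
    (h2.pow 2).add ((h1.const_mul a₁).mul h3)
  have hden0 : (deriv f α) ^ 2 + a₁ * f α * deriv (deriv f) α ≠ 0 := by
    simp [hα, pow_ne_zero, hα']
  have hquot := hnum.div hden hden0
  have hFeq : F = fun x => x - f x * deriv f x /
      ((deriv f x) ^ 2 + a₁ * f x * deriv (deriv f) x) := funext hF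
  have hF' := (hasDerivAt_id α).sub hquot
  simp only [Pi.sub_def, Pi.div_def, id_eq] at hF'
  rw [hFeq, hF'.deriv, hα]
  field_simp
  ring
end

section
/- Let f : ℝ → ℝ be three times continuously differentiable, α a simple zero of f, and F(x) = x - f(x)·f'(x)/((f'(x))² + a₁·f(x)·f''(x)). Then F is twice differentiable at α and F''(α) = (1 + 2a₁)·f''(α)/f'(α). -/
open Filter Topology Asymptotics

/-- If `u` has derivative `0` at `α` with `u α = 0` and `w` is continuous at `α`,
then `u * w` has derivative `0` at `α`. -/
lemma hasDerivAt_mul_zero {u w : ℝ → ℝ} {α : ℝ} (hu : HasDerivAt u 0 α) (hu0 : u α = 0)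
    (hw : ContinuousAt w α) : HasDerivAt (fun x => u x * w x) 0 α := by
  rw [hasDerivAt_iff_isLittleO] at hu ⊢
  simp only [hu0, zero_mul, sub_zero, smul_eq_mul, mul_zero] at hu ⊢
  have hwO : w =O[𝓝 α] (fun _ => (1 : ℝ)) := hw.isBigO_one ℝ
  have := hu.mul_isBigO hwO
  simpa using this

theorem second_deriv_modified_newton (f : ℝ → ℝ) (hf : ContDiff ℝ 3 f)
    (a₁ : ℝ) (α : ℝ) (hα : f α = 0) (hα' : deriv f α ≠ 0)
    (F : ℝ → ℝ)
    (hF : ∀ x, F x = x - f x * deriv f x /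
      ((deriv f x) ^ 2 + a₁ * f x * deriv (deriv f) x)) :
    DifferentiableAt ℝ (deriv F) α ∧
      deriv (deriv F) α = (1 + 2 * a₁) * deriv (deriv f) α / deriv f α := by
  -- regularity of f, f', f''
  have h3 : ContDiff ℝ (2 + 1) f := by
    convert hf using 2
    norm_num
  rw [contDiff_succ_iff_deriv] at h3
  obtain ⟨hdf, -, hf'⟩ := h3
  have h2 : ContDiff ℝ ((1 : ℕ) + 1) (deriv f) := by
    exact_mod_cast hf'
  rw [contDiff_succ_iff_deriv] at h2
  obtain ⟨hdf', -, hf''⟩ := h2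
  have h1 : ContDiff ℝ ((0 : ℕ) + 1) (deriv (deriv f)) := by
    exact_mod_cast hf''
  rw [contDiff_succ_iff_deriv] at h1
  obtain ⟨hdf'', -, hf'''⟩ := h1
  set f1 := deriv f with hf1def
  set f2 := deriv f1 with hf2def
  set f3 := deriv f2 with hf3def
  have hcf3 : Continuous f3 := hf'''.continuous
  have hfd : ∀ x, HasDerivAt f (f1 x) x := fun x => (hdf x).hasDerivAt
  have hf1d : ∀ x, HasDerivAt f1 (f2 x) x := fun x => (hdf' x).hasDerivAt
  have hf2d : ∀ x, HasDerivAt f2 (f3 x) x := fun x => (hdf'' x).hasDerivAt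
  -- the denominator
  set D : ℝ → ℝ := fun x => f1 x ^ 2 + a₁ * f x * f2 x with hDdef
  have hDα : D α = f1 α ^ 2 := by simp [hDdef, hα]
  have hDα0 : D α ≠ 0 := by rw [hDα]; exact pow_ne_zero _ hα'
  have hDc : Continuous D := by
    exact (hdf'.continuous.pow 2).add ((continuous_const.mul hdf.continuous).mul
      hdf''.continuous)
  have hne : ∀ᶠ x in 𝓝 α, D x ≠ 0 := hDc.continuousAt.eventually_ne hDα0
  have hDd : ∀ x, HasDerivAt D
      (2 * f1 x * f2 x + a₁ * (f1 x * f2 x + f x * f3 x)) x := by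
    intro x
    have h := ((hf1d x).pow 2).add (((hfd x).const_mul a₁).mul (hf2d x))
    refine h.congr_deriv ?_
    push_cast
    ring
  -- the explicit first derivative
  set Φ : ℝ → ℝ := fun x => 1 - ((f1 x * f1 x + f x * f2 x) * D x -
      f x * f1 x * (2 * f1 x * f2 x + a₁ * (f1 x * f2 x + f x * f3 x))) / D x ^ 2
    with hΦdef
  have hFeq : F = fun y => y - f y * f1 y / D y := funext fun y => hF y
  have hFd : ∀ᶠ x in 𝓝 α, HasDerivAt F (Φ x) x := by
    filter_upwards [hne] with x hx
    have hq := ((hfd x).mul (hf1d x)).div (hDd x) hx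
    have hFx := (hasDerivAt_id x).sub hq
    rw [hFeq]
    exact hFx
  have hderivF : deriv F =ᶠ[𝓝 α] Φ := hFd.mono fun x hx => hx.deriv
  -- split Φ into a nice part and a degenerate part involving f'''
  set P : ℝ → ℝ := fun x => (f1 x * f1 x + f x * f2 x) * D x -
      (2 + a₁) * (f x * f1 x ^ 2 * f2 x) with hPdef
  set ψ : ℝ → ℝ := fun x => f x ^ 2 * (a₁ * f1 x * f3 x / D x ^ 2) with hψdef
  have hsplit : Φ = fun x => (1 - P x / D x ^ 2) + ψ x := by
    funext x
    rw [hΦdef, hPdef, hψdef]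
    ring
  -- derivative of ψ at α is 0
  have hψd : HasDerivAt ψ 0 α := by
    have hu : HasDerivAt (fun x => f x ^ 2) 0 α := by
      have := (hfd α).pow 2
      simpa [hα, Pi.pow_def] using this
    have hw : ContinuousAt (fun x => a₁ * f1 x * f3 x / D x ^ 2) α := by
      exact (((continuousAt_const.mul hdf'.continuous.continuousAt).mul
        hcf3.continuousAt).div ((hDc.pow 2).continuousAt) (pow_ne_zero _ hDα0))
    exact hasDerivAt_mul_zero hu (by simp [hα]) hw
  -- derivative of the nice part at α
  have hPd := ((((hf1d α).mul (hf1d α)).add ((hfd α).mul (hf2d α))).mul (hDd α)).sub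
      ((((hfd α).mul ((hf1d α).pow 2)).mul (hf2d α)).const_mul (2 + a₁))
  have hD2 := (hDd α).pow 2
  have hΦ₁ := (hasDerivAt_const α (1 : ℝ)).sub (hPd.div hD2 (pow_ne_zero _ hDα0))
  have hΦd := hΦ₁.add hψd
  change HasDerivAt (fun x => (1 - P x / D x ^ 2) + ψ x) _ α at hΦd
  rw [← hsplit] at hΦd
  constructor
  · exact (hderivF.differentiableAt_iff).mpr hΦd.differentiableAt
  · rw [hderivF.deriv_eq, hΦd.deriv]
    rw [hDdef]
    simp only [hα]
    simp only [Pi.pow_apply, Pi.add_apply, Pi.mul_apply, Pi.sub_apply, hα, Nat.reduceSub, pow_one]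
    push_cast
    field_simp
    ring
end

section
/- Let f : ℝ → ℝ be C³, α a simple zero of f, and F(x) = x - f(x)·f'(x)/((f'(x))² + a₁·f(x)·f''(x)) with a₁ ≠ -1/2 and f''(α) ≠ 0. Then there exist constants C > 0, c > 0 and δ > 0 such that for all x with |x - α| < δ, c·|x - α|² ≤ |F(x) - α| ≤ C·|x - α|². In particular the iteration converges exactly quadratically near α. -/
open Filter Topology Set

theorem quadratic_convergence_modified_newton (f : ℝ → ℝ) (hf : ContDiff ℝ 3 f)
    (a₁ : ℝ) (ha₁ : a₁ ≠ -(1 / 2)) (α : ℝ) (hα : f α = 0) (hα' : deriv f α ≠ 0)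
    (hα'' : deriv (deriv f) α ≠ 0)
    (F : ℝ → ℝ)
    (hF : ∀ x, F x = x - f x * deriv f x /
      ((deriv f x) ^ 2 + a₁ * f x * deriv (deriv f) x)) :
    ∃ C > (0 : ℝ), ∃ c > (0 : ℝ), ∃ δ > (0 : ℝ), ∀ x : ℝ, |x - α| < δ →
      c * |x - α| ^ 2 ≤ |F x - α| ∧ |F x - α| ≤ C * |x - α| ^ 2 := by
  set A := deriv f α with hA
  set B := deriv (deriv f) α with hB
  -- regularity
  have h2 := contDiff_succ_iff_deriv.mp (show ContDiff ℝ (2+1) f by norm_num; exact hf)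
  have hfd : Differentiable ℝ f := h2.1
  have hf2 : ContDiff ℝ 2 (deriv f) := h2.2.2
  have h1 := contDiff_succ_iff_deriv.mp (show ContDiff ℝ (1+1) (deriv f) by norm_num; exact hf2)
  have hf'd : Differentiable ℝ (deriv f) := h1.1
  have hf''c : Continuous (deriv (deriv f)) := h1.2.2.continuous
  have hf'c : Continuous (deriv f) := hf'd.continuous
  have hfc : Continuous f := hfd.continuous
  -- basic limits on the punctured neighborhood
  have hAlim : Tendsto (fun x => f x / (x - α)) (𝓝[≠] α) (𝓝 A) := by
    have h := (hfd α).hasDerivAt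
    rw [hasDerivAt_iff_tendsto_slope] at h
    exact h.congr (fun x => by simp [slope_def_field, hα])
  have hf'lim : Tendsto (deriv f) (𝓝[≠] α) (𝓝 A) :=
    (hf'c.continuousAt.tendsto).mono_left nhdsWithin_le_nhds
  have hf''lim : Tendsto (deriv (deriv f)) (𝓝[≠] α) (𝓝 B) :=
    (hf''c.continuousAt.tendsto).mono_left nhdsWithin_le_nhds
  have hne : ∀ᶠ x in 𝓝[≠] α, x ≠ α := by
    filter_upwards [self_mem_nhdsWithin] with x hx using hx
  -- Taylor-type limit via L'Hôpital
  have hG : Tendsto (fun x => ((x - α) * deriv f x - f x) / (x - α) ^ 2)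
      (𝓝[≠] α) (𝓝 (B / 2)) := by
    apply HasDerivAt.lhopital_zero_nhdsNE
      (f' := fun x => (x - α) * deriv (deriv f) x) (g' := fun x => 2 * (x - α))
    · filter_upwards with x
      have h0 := (((hasDerivAt_id x).sub_const α).mul (hf'd x).hasDerivAt).sub (hfd x).hasDerivAt
      simp only [id_eq] at h0
      exact h0.congr_deriv (by ring)
    · filter_upwards with x
      have h0 := ((hasDerivAt_id x).sub_const α).pow 2
      simp only [id_eq] at h0
      exact h0.congr_deriv (by ring)
    · filter_upwards [hne] with x hx
      exact mul_ne_zero two_ne_zero (sub_ne_zero.mpr hx)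
    · have : Tendsto (fun x => (x - α) * deriv f x - f x) (𝓝 α) (𝓝 ((α - α) * A - f α)) :=
        (((continuous_id.sub continuous_const).mul hf'c).sub hfc).continuousAt.tendsto
      simpa [hα] using this.mono_left nhdsWithin_le_nhds
    · have : Tendsto (fun x => (x - α) ^ 2) (𝓝 α) (𝓝 ((α - α) ^ 2)) :=
        ((continuous_id.sub continuous_const).pow 2).continuousAt.tendsto
      simpa using this.mono_left nhdsWithin_le_nhds
    · have h0 : Tendsto (fun x => deriv (deriv f) x / 2) (𝓝[≠] α) (𝓝 (B / 2)) :=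
        hf''lim.div_const 2
      apply h0.congr'
      filter_upwards [hne] with x hx
      have ht : x - α ≠ 0 := sub_ne_zero.mpr hx
      field_simp
  -- denominator limit
  have hDlim : Tendsto (fun x => (deriv f x) ^ 2 + a₁ * f x * deriv (deriv f) x)
      (𝓝[≠] α) (𝓝 (A ^ 2)) := by
    have : Tendsto (fun x => (deriv f x) ^ 2 + a₁ * f x * deriv (deriv f) x) (𝓝 α)
        (𝓝 (A ^ 2 + a₁ * f α * B)) :=
      ((hf'c.pow 2).add (((continuous_const.mul hfc)).mul hf''c)).continuousAt.tendsto
    simpa [hα] using this.mono_left nhdsWithin_le_nhds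
  have hA2 : (A : ℝ) ^ 2 ≠ 0 := pow_ne_zero 2 hα'
  have hDne : ∀ᶠ x in 𝓝[≠] α, (deriv f x) ^ 2 + a₁ * f x * deriv (deriv f) x ≠ 0 :=
    hDlim.eventually_ne hA2
  -- the key ratio limit
  set L : ℝ := (A * (B / 2) + a₁ * A * B) / A ^ 2 with hL
  have hKey : Tendsto (fun x => (F x - α) / (x - α) ^ 2) (𝓝[≠] α) (𝓝 L) := by
    have hnum : Tendsto (fun x => deriv f x * (((x - α) * deriv f x - f x) / (x - α) ^ 2)
        + a₁ * (f x / (x - α)) * deriv (deriv f) x) (𝓝[≠] α) (𝓝 (A * (B / 2) + a₁ * A * B)) :=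
      (hf'lim.mul hG).add (((tendsto_const_nhds.mul hAlim)).mul hf''lim)
    have h0 := hnum.div hDlim hA2
    apply h0.congr'
    filter_upwards [hne, hDne] with x hx hD
    have ht : x - α ≠ 0 := sub_ne_zero.mpr hx
    rw [Pi.div_apply]
    rw [hF]
    have hD' : deriv f x ^ 2 + f x * a₁ * deriv (deriv f) x ≠ 0 := by rwa [mul_comm (f x) a₁]
    field_simp
    ring
  -- L ≠ 0
  have hLne : L ≠ 0 := by
    have hnum : A * (B / 2) + a₁ * A * B = A * B * (a₁ + 1 / 2) := by ring
    have h12 : a₁ + 1 / 2 ≠ 0 := by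
      intro h; apply ha₁; linarith
    rw [hL, hnum]
    exact div_ne_zero (mul_ne_zero (mul_ne_zero hα' hα'') h12) hA2
  have hLpos : 0 < |L| := abs_pos.mpr hLne
  -- eventual two-sided bound on the ratio
  have habs : Tendsto (fun x => |(F x - α) / (x - α) ^ 2|) (𝓝[≠] α) (𝓝 |L|) := hKey.abs
  have hIoo : ∀ᶠ x in 𝓝[≠] α,
      |(F x - α) / (x - α) ^ 2| ∈ Ioo (|L| / 2) (2 * |L|) :=
    habs (Ioo_mem_nhds (by linarith) (by linarith))
  rw [eventually_nhdsWithin_iff] at hIoo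
  rw [Metric.eventually_nhds_iff] at hIoo
  obtain ⟨δ, hδ, hball⟩ := hIoo
  refine ⟨2 * |L|, by linarith, |L| / 2, by linarith, δ, hδ, fun x hx => ?_⟩
  by_cases hxα : x = α
  · have hFa : F α = α := by rw [hF]; simp [hα]
    rw [hxα]
    simp [hFa]
  · have hd : dist x α < δ := by rwa [Real.dist_eq]
    have hmem := hball hd (by simpa using hxα)
    obtain ⟨hlo, hhi⟩ := hmem
    have ht : x - α ≠ 0 := sub_ne_zero.mpr hxα
    have htpos : 0 < |x - α| ^ 2 := by positivity
    have heq : |(F x - α) / (x - α) ^ 2| = |F x - α| / |x - α| ^ 2 := by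
      rw [abs_div, abs_pow]
    rw [heq] at hlo hhi
    exact ⟨(le_div_iff₀ htpos).mp hlo.le, (div_le_iff₀ htpos).mp hhi.le⟩
end
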